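/- arXiv:math/0301080 — 7 statements merged into one kernel-verified Lean document; each statement's English description precedes it below -/
import Mathlib

section
/- Any associative dialgebra can be given the structure of a dendriform algebra by setting a ≺ b = a ⊣ b and a ≻ b = a ⊢ b − a ⊣ b; moreover the associated associative product a * b = a ≺ b + a ≻ b equals a ⊢ b. -/
/-- Any associative dialgebra becomes a dendriform algebra via
`a ≺ b = a ⊣ b`, `a ≻ b = a ⊢ b - a ⊣ b`, and the associated product
`a * b = a ≺ b + a ≻ b` equals `a ⊢ b`. -/
theorem dialgebra_to_dendriform {k D : Type*} [Field k] [AddCommGroup D] [Module k D]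
    (vdash dashv : D →ₗ[k] D →ₗ[k] D)
    (hvdash_assoc : ∀ x y z : D, vdash (vdash x y) z = vdash x (vdash y z))
    (hdashv_assoc : ∀ x y z : D, dashv (dashv x y) z = dashv x (dashv y z))
    (hax1 : ∀ x y z : D, dashv x (dashv y z) = dashv x (vdash y z))
    (hax2 : ∀ x y z : D, dashv (vdash x y) z = vdash x (dashv y z))
    (hax3 : ∀ x y z : D, vdash (dashv x y) z = vdash (vdash x y) z) :
    ∀ a b c : D,
      -- dendriform axiom 1: (a ≺ b) ≺ c = a ≺ (b ≺ c) + a ≺ (b ≻ c)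
      (dashv (dashv a b) c = dashv a (dashv b c) + dashv a (vdash b c - dashv b c)) ∧
      -- dendriform axiom 2: (a ≻ b) ≺ c = a ≻ (b ≺ c)
      (dashv (vdash a b - dashv a b) c
        = vdash a (dashv b c) - dashv a (dashv b c)) ∧
      -- dendriform axiom 3: (a ≺ b) ≻ c + (a ≻ b) ≻ c = a ≻ (b ≻ c)
      ((vdash (dashv a b) c - dashv (dashv a b) c)
          + (vdash (vdash a b - dashv a b) c - dashv (vdash a b - dashv a b) c)
        = vdash a (vdash b c - dashv b c) - dashv a (vdash b c - dashv b c)) ∧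
      -- a * b := a ≺ b + a ≻ b equals a ⊢ b
      (dashv a b + (vdash a b - dashv a b) = vdash a b) := by
  intro a b c
  refine ⟨?_, ?_, ?_, ?_⟩
  · simp only [map_sub, LinearMap.sub_apply, hax1 a (dashv b c), hdashv_assoc]
    rw [← hax1]; abel
  · simp only [map_sub, LinearMap.sub_apply, hax2, hdashv_assoc, hax1 a b c]
  · simp only [map_sub, LinearMap.sub_apply, hax3, hax2, hdashv_assoc,
      hvdash_assoc, hax1]
    abel
  · abel
end

section
/- Let (C₁, Δ₁) be a coassociative coalgebra, Φ : C₁ → C₂ an isomorphism of coalgebras onto a coalgebra (C₂, Δ₂) (so Δ₂Φ = (Φ⊗Φ)Δ₁), with C₁ ∩ C₂ = 0 in an ambient space E. Define Δ* piecewise as Δ₁ on C₁ and Δ₂ on C₂, and define δ₁ on D := C₁ ⊕ C₂ by δ₁ = Δ₁ on C₁ and δ₁Φ = (id ⊗ Φ)Δ₁ on C₂. Then (D, Δ*, δ₁) is a codipterous coalgebra, i.e. Δ* is coassociative and (Δ* ⊗ id)δ₁ = (id ⊗ δ₁)δ₁. -/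
open TensorProduct

/-- `(f ⊗ id) ∘ g`, rebracketed via the associator. -/
noncomputable def cL {k M : Type*} [Field k] [AddCommGroup M] [Module k M]
    (f g : M →ₗ[k] M ⊗[k] M) : M →ₗ[k] M ⊗[k] (M ⊗[k] M) :=
  (TensorProduct.assoc k M M M).toLinearMap ∘ₗ (TensorProduct.map f LinearMap.id) ∘ₗ g

/-- `(id ⊗ f) ∘ g`. -/
noncomputable def cR {k M : Type*} [Field k] [AddCommGroup M] [Module k M]
    (f g : M →ₗ[k] M ⊗[k] M) : M →ₗ[k] M ⊗[k] (M ⊗[k] M) :=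
  (TensorProduct.map LinearMap.id f) ∘ₗ g

section SelfEntanglement

variable (k C : Type*) [Field k] [AddCommGroup C] [Module k C]

/-- `D = C₁ ⊕ C₂` with `C₁` the first copy of `C` (inclusion `inl`), `C₂ = Φ(C₁)` the
second copy (the channel map `Φ` being the identification `inr`). `Δ*` is `Δ₁` on `C₁`
and `Δ₂ = (Φ ⊗ Φ)Δ₁Φ⁻¹` on `C₂`. -/
noncomputable def Δstar (Δ : C →ₗ[k] C ⊗[k] C) :
    (C × C) →ₗ[k] (C × C) ⊗[k] (C × C) :=
  LinearMap.coprod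
    ((TensorProduct.map (LinearMap.inl k C C) (LinearMap.inl k C C)) ∘ₗ Δ)
    ((TensorProduct.map (LinearMap.inr k C C) (LinearMap.inr k C C)) ∘ₗ Δ)

/-- The bridge `δ₁`: equal to `Δ₁` on `C₁`, and `δ₁ ∘ Φ = (id ⊗ Φ)Δ₁` on `C₂`. -/
noncomputable def δone (Δ : C →ₗ[k] C ⊗[k] C) :
    (C × C) →ₗ[k] (C × C) ⊗[k] (C × C) :=
  LinearMap.coprod
    ((TensorProduct.map (LinearMap.inl k C C) (LinearMap.inl k C C)) ∘ₗ Δ)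
    ((TensorProduct.map (LinearMap.inl k C C) (LinearMap.inr k C C)) ∘ₗ Δ)

end SelfEntanglement

section Aux

variable {k C : Type*} [Field k] [AddCommGroup C] [Module k C]

lemma aux_L (Δ : C →ₗ[k] C ⊗[k] C) (p q b : C →ₗ[k] C × C) :
    (TensorProduct.assoc k (C × C) (C × C) (C × C)).toLinearMap ∘ₗ
      TensorProduct.map ((TensorProduct.map p q) ∘ₗ Δ) b ∘ₗ Δ =
    TensorProduct.map p (TensorProduct.map q b) ∘ₗ cL Δ Δ := by
  have e1 : TensorProduct.map ((TensorProduct.map p q) ∘ₗ Δ) b =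
      TensorProduct.map (TensorProduct.map p q) b ∘ₗ
        TensorProduct.map Δ (LinearMap.id : C →ₗ[k] C) := by
    rw [← TensorProduct.map_comp, LinearMap.comp_id]
  rw [e1, cL]
  simp only [← LinearMap.comp_assoc, TensorProduct.map_map_comp_assoc_eq]

lemma aux_R (Δ : C →ₗ[k] C ⊗[k] C) (p q b : C →ₗ[k] C × C) :
    TensorProduct.map p ((TensorProduct.map q b) ∘ₗ Δ) ∘ₗ Δ =
    TensorProduct.map p (TensorProduct.map q b) ∘ₗ cR Δ Δ := by
  have e1 : TensorProduct.map p ((TensorProduct.map q b) ∘ₗ Δ) =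
      TensorProduct.map p (TensorProduct.map q b) ∘ₗ
        TensorProduct.map (LinearMap.id : C →ₗ[k] C) Δ := by
    rw [← TensorProduct.map_comp, LinearMap.comp_id]
  rw [e1, cR, LinearMap.comp_assoc]

lemma key (Δ : C →ₗ[k] C ⊗[k] C) (hΔ : cL Δ Δ = cR Δ Δ)
    (f g₁ g₂ : (C × C) →ₗ[k] (C × C) ⊗[k] (C × C)) (x p v b : C →ₗ[k] C × C)
    (hg₂ : g₂ ∘ₗ x = TensorProduct.map p b ∘ₗ Δ)
    (hf : f ∘ₗ p = TensorProduct.map p v ∘ₗ Δ)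
    (hg₁ : g₁ ∘ₗ b = TensorProduct.map v b ∘ₗ Δ) :
    cL f g₂ ∘ₗ x = cR g₁ g₂ ∘ₗ x := by
  have h2 : TensorProduct.map f (LinearMap.id : (C × C) →ₗ[k] (C × C)) ∘ₗ
      TensorProduct.map p b = TensorProduct.map ((TensorProduct.map p v) ∘ₗ Δ) b := by
    rw [← TensorProduct.map_comp, hf, LinearMap.id_comp]
  have h3 : TensorProduct.map (LinearMap.id : (C × C) →ₗ[k] (C × C)) g₁ ∘ₗ
      TensorProduct.map p b = TensorProduct.map p ((TensorProduct.map v b) ∘ₗ Δ) := by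
    rw [← TensorProduct.map_comp, hg₁, LinearMap.id_comp]
  have hL : cL f g₂ ∘ₗ x = TensorProduct.map p (TensorProduct.map v b) ∘ₗ cL Δ Δ := by
    rw [cL, LinearMap.comp_assoc, LinearMap.comp_assoc, hg₂,
      ← LinearMap.comp_assoc Δ (TensorProduct.map p b), h2]
    exact aux_L Δ p v b
  have hR : cR g₁ g₂ ∘ₗ x = TensorProduct.map p (TensorProduct.map v b) ∘ₗ cR Δ Δ := by
    rw [cR, LinearMap.comp_assoc, hg₂,
      ← LinearMap.comp_assoc Δ (TensorProduct.map p b), h3, aux_R]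
  rw [hL, hR, hΔ]

end Aux

/-- For a coassociative coalgebra `(C₁, Δ₁)` and a coalgebra
isomorphism `Φ : C₁ → C₂` (here `C₂` is the second copy of `C₁` in `D = C₁ ⊕ C₂`,
`Φ = inr`), the space `(D, Δ*, δ₁)` is a codipterous coalgebra:
`Δ*` is coassociative and `(Δ* ⊗ id)δ₁ = (id ⊗ δ₁)δ₁`. -/
theorem self_entanglement_codipterous {k C : Type*} [Field k] [AddCommGroup C] [Module k C]
    (Δ : C →ₗ[k] C ⊗[k] C) (hΔ : cL Δ Δ = cR Δ Δ) :
    cL (Δstar k C Δ) (Δstar k C Δ) = cR (Δstar k C Δ) (Δstar k C Δ) ∧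
    cL (Δstar k C Δ) (δone k C Δ) = cR (δone k C Δ) (δone k C Δ) := by
  set i := LinearMap.inl k C C
  set j := LinearMap.inr k C C
  have si : Δstar k C Δ ∘ₗ i = TensorProduct.map i i ∘ₗ Δ := by
    rw [Δstar]; exact LinearMap.coprod_inl _ _
  have sj : Δstar k C Δ ∘ₗ j = TensorProduct.map j j ∘ₗ Δ := by
    rw [Δstar]; exact LinearMap.coprod_inr _ _
  have di : δone k C Δ ∘ₗ i = TensorProduct.map i i ∘ₗ Δ := by
    rw [δone]; exact LinearMap.coprod_inl _ _
  have dj : δone k C Δ ∘ₗ j = TensorProduct.map i j ∘ₗ Δ := by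
    rw [δone]; exact LinearMap.coprod_inr _ _
  constructor
  · apply LinearMap.prod_ext
    · exact key Δ hΔ _ _ _ i i i i si si si
    · exact key Δ hΔ _ _ _ j j j j sj sj sj
  · apply LinearMap.prod_ext
    · exact key Δ hΔ _ _ _ i i i i di si di
    · exact key Δ hΔ _ _ _ j i i j dj si dj
end

section
/- With C₁, C₂, Φ and Δ* as above, define δ₁ = Δ₁ on C₁ with δ₁Φ = (id ⊗ Φ)Δ₁ on C₂, and δ̂₁ = Δ₁ on C₁ with δ̂₁Φ = (Φ ⊗ id)Δ₁ on C₂. Then (D, Δ*, δ₁, δ̂₁) is a pre-dendriform coalgebra: Δ* is coassociative, (Δ* ⊗ id)δ₁ = (id ⊗ δ₁)δ₁, (id ⊗ Δ*)δ̂₁ = (δ̂₁ ⊗ id)δ̂₁, and (id ⊗ δ̂₁)δ₁ = (δ₁ ⊗ id)δ̂₁. -/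
open TensorProduct

section SelfEntanglement

variable (k C : Type*) [Field k] [AddCommGroup C] [Module k C]

/-- The bridge `δ̂₁`: equal to `Δ₁` on `C₁`, with `δ̂₁ ∘ Φ = (Φ ⊗ id)Δ₁` on `C₂`. -/
noncomputable def δhatone (Δ : C →ₗ[k] C ⊗[k] C) :
    (C × C) →ₗ[k] (C × C) ⊗[k] (C × C) :=
  LinearMap.coprod
    ((TensorProduct.map (LinearMap.inl k C C) (LinearMap.inl k C C)) ∘ₗ Δ)
    ((TensorProduct.map (LinearMap.inr k C C) (LinearMap.inl k C C)) ∘ₗ Δ)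

end SelfEntanglement

/-!
Each of `Δ*`, `δ₁`, `δ̂₁` restricts on either summand of `D = C × C` to a twisted copy
`(a ⊗ b) ∘ Δ` of `Δ`, with `a, b ∈ {inl, inr}`. Restricted to a summand, the two sides of
each axiom therefore become `(x ⊗ y ⊗ z) ∘ (Δ ⊗ id)Δ` and `(x ⊗ y ⊗ z) ∘ (id ⊗ Δ)Δ` with the
same labels `x, y, z`, and coassociativity of `Δ` identifies them.
-/

section Coassociativity

variable {k M N : Type*} [Field k] [AddCommGroup M] [Module k M] [AddCommGroup N] [Module k N]

theorem assoc_comp_map_map (x y z : M →ₗ[k] N) :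
    (TensorProduct.assoc k N N N).toLinearMap ∘ₗ TensorProduct.map (TensorProduct.map x y) z =
      TensorProduct.map x (TensorProduct.map y z) ∘ₗ (TensorProduct.assoc k M M M).toLinearMap :=
  TensorProduct.ext_threefold fun _ _ _ => rfl

variable {Δ : M →ₗ[k] M ⊗[k] M} {F G : N →ₗ[k] N ⊗[k] N} {i : M →ₗ[k] N}

theorem cL_comp_of_comp_eq_map {a b x y : M →ₗ[k] N}
    (hG : G ∘ₗ i = TensorProduct.map a b ∘ₗ Δ) (hF : F ∘ₗ a = TensorProduct.map x y ∘ₗ Δ) :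
    cL F G ∘ₗ i = TensorProduct.map x (TensorProduct.map y b) ∘ₗ cL Δ Δ := by
  have hmap : TensorProduct.map F LinearMap.id ∘ₗ TensorProduct.map a b =
      TensorProduct.map (TensorProduct.map x y) b ∘ₗ TensorProduct.map Δ LinearMap.id := by
    rw [← TensorProduct.map_comp, ← TensorProduct.map_comp, hF, LinearMap.id_comp,
      LinearMap.comp_id]
  calc cL F G ∘ₗ i
      = ((TensorProduct.assoc k N N N).toLinearMap ∘ₗ TensorProduct.map (TensorProduct.map x y) b)
          ∘ₗ TensorProduct.map Δ LinearMap.id ∘ₗ Δ := by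
        simp only [cL, LinearMap.comp_assoc, hG]
        simp only [← LinearMap.comp_assoc, hmap]
    _ = TensorProduct.map x (TensorProduct.map y b) ∘ₗ cL Δ Δ := by
        rw [assoc_comp_map_map]
        rfl

theorem cR_comp_of_comp_eq_map {x w y z : M →ₗ[k] N}
    (hG : G ∘ₗ i = TensorProduct.map x w ∘ₗ Δ) (hF : F ∘ₗ w = TensorProduct.map y z ∘ₗ Δ) :
    cR F G ∘ₗ i = TensorProduct.map x (TensorProduct.map y z) ∘ₗ cR Δ Δ := by
  simp only [cR, LinearMap.comp_assoc, hG]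
  simp only [← LinearMap.comp_assoc, ← TensorProduct.map_comp, LinearMap.id_comp,
    LinearMap.comp_id, hF]

theorem cL_comp_eq_cR_comp (hΔ : cL Δ Δ = cR Δ Δ) {F' G' : N →ₗ[k] N ⊗[k] N}
    {a b x y w : M →ₗ[k] N}
    (hG : G ∘ₗ i = TensorProduct.map a b ∘ₗ Δ) (hF : F ∘ₗ a = TensorProduct.map x y ∘ₗ Δ)
    (hG' : G' ∘ₗ i = TensorProduct.map x w ∘ₗ Δ) (hF' : F' ∘ₗ w = TensorProduct.map y b ∘ₗ Δ) :
    cL F G ∘ₗ i = cR F' G' ∘ₗ i := by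
  rw [cL_comp_of_comp_eq_map hG hF, cR_comp_of_comp_eq_map hG' hF', hΔ]

end Coassociativity

/-- `(D, Δ*, δ₁, δ̂₁)` from the self-entanglement construction is a
pre-dendriform coalgebra: `Δ*` is coassociative, `(Δ* ⊗ id)δ₁ = (id ⊗ δ₁)δ₁`,
`(id ⊗ Δ*)δ̂₁ = (δ̂₁ ⊗ id)δ̂₁` and `(id ⊗ δ̂₁)δ₁ = (δ₁ ⊗ id)δ̂₁`. -/
theorem self_entanglement_pre_dendriform {k C : Type*} [Field k] [AddCommGroup C] [Module k C]
    (Δ : C →ₗ[k] C ⊗[k] C) (hΔ : cL Δ Δ = cR Δ Δ) :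
    cL (Δstar k C Δ) (Δstar k C Δ) = cR (Δstar k C Δ) (Δstar k C Δ) ∧
    cL (Δstar k C Δ) (δone k C Δ) = cR (δone k C Δ) (δone k C Δ) ∧
    cR (Δstar k C Δ) (δhatone k C Δ) = cL (δhatone k C Δ) (δhatone k C Δ) ∧
    cR (δhatone k C Δ) (δone k C Δ) = cL (δone k C Δ) (δhatone k C Δ) := by
  refine ⟨?_, ?_, Eq.symm ?_, Eq.symm ?_⟩ <;> apply LinearMap.prod_ext <;>
    apply cL_comp_eq_cR_comp hΔ <;>
    first
    | exact LinearMap.coprod_inl _ _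
    | exact LinearMap.coprod_inr _ _
end

section
/- The pre-dendriform coalgebra (D, δ₁, δ̂₁) from the self-entanglement construction is a coassociative codialgebra: both δ₁ and δ̂₁ are coassociative, (id ⊗ δ̂₁)δ̂₁ = (id ⊗ δ₁)δ̂₁, (δ₁ ⊗ id)δ₁ = (δ̂₁ ⊗ id)δ₁, and (δ₁ ⊗ id)δ̂₁ = (id ⊗ δ̂₁)δ₁. -/
open TensorProduct

section Aux
variable {k C D : Type*} [Field k] [AddCommGroup C] [Module k C]
  [AddCommGroup D] [Module k D]

lemma assoc_nat (p q v : C →ₗ[k] D) :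
    (TensorProduct.assoc k D D D).toLinearMap ∘ₗ
      TensorProduct.map (TensorProduct.map p q) v =
    TensorProduct.map p (TensorProduct.map q v) ∘ₗ
      (TensorProduct.assoc k C C C).toLinearMap := by
  apply TensorProduct.ext_threefold
  intro x y z
  simp

lemma red_L {M : Type*} [AddCommGroup M] [Module k M]
    (Δ : C →ₗ[k] C ⊗[k] C) (f g : M →ₗ[k] M ⊗[k] M)
    (a u v p q : C →ₗ[k] M)
    (hg : g ∘ₗ a = TensorProduct.map u v ∘ₗ Δ)
    (hf : f ∘ₗ u = TensorProduct.map p q ∘ₗ Δ) :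
    (cL f g) ∘ₗ a = TensorProduct.map p (TensorProduct.map q v) ∘ₗ cL Δ Δ := by
  unfold cL
  rw [LinearMap.comp_assoc, LinearMap.comp_assoc, hg,
    ← LinearMap.comp_assoc Δ (TensorProduct.map u v) (TensorProduct.map f LinearMap.id)]
  have h1 : TensorProduct.map f LinearMap.id ∘ₗ TensorProduct.map u v
      = TensorProduct.map (TensorProduct.map p q) v ∘ₗ TensorProduct.map Δ LinearMap.id := by
    rw [← TensorProduct.map_comp, ← TensorProduct.map_comp, hf, LinearMap.id_comp,
      LinearMap.comp_id]
  rw [h1, LinearMap.comp_assoc Δ (TensorProduct.map Δ LinearMap.id)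
      (TensorProduct.map (TensorProduct.map p q) v),
    ← LinearMap.comp_assoc (TensorProduct.map Δ LinearMap.id ∘ₗ Δ)
      (TensorProduct.map (TensorProduct.map p q) v)
      (TensorProduct.assoc k M M M).toLinearMap,
    assoc_nat, LinearMap.comp_assoc]

lemma red_R {M : Type*} [AddCommGroup M] [Module k M]
    (Δ : C →ₗ[k] C ⊗[k] C) (f g : M →ₗ[k] M ⊗[k] M)
    (a u v r s : C →ₗ[k] M)
    (hg : g ∘ₗ a = TensorProduct.map u v ∘ₗ Δ)
    (hf : f ∘ₗ v = TensorProduct.map r s ∘ₗ Δ) :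
    (cR f g) ∘ₗ a = TensorProduct.map u (TensorProduct.map r s) ∘ₗ cR Δ Δ := by
  unfold cR
  rw [LinearMap.comp_assoc, hg, ← LinearMap.comp_assoc]
  have h1 : TensorProduct.map LinearMap.id f ∘ₗ TensorProduct.map u v
      = TensorProduct.map u (TensorProduct.map r s) ∘ₗ TensorProduct.map LinearMap.id Δ := by
    rw [← TensorProduct.map_comp, ← TensorProduct.map_comp, hf, LinearMap.id_comp,
      LinearMap.comp_id]
  rw [h1, LinearMap.comp_assoc]

end Aux

/-- The pre-dendriform coalgebra `(D, δ₁, δ̂₁)` from the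
self-entanglement construction is a coassociative codialgebra: `δ₁` and `δ̂₁` are
coassociative, `(id ⊗ δ̂₁)δ̂₁ = (id ⊗ δ₁)δ̂₁`, `(δ₁ ⊗ id)δ₁ = (δ̂₁ ⊗ id)δ₁`, and
`(δ₁ ⊗ id)δ̂₁ = (id ⊗ δ̂₁)δ₁`. -/
theorem self_entanglement_codialgebra {k C : Type*} [Field k] [AddCommGroup C] [Module k C]
    (Δ : C →ₗ[k] C ⊗[k] C) (hΔ : cL Δ Δ = cR Δ Δ) :
    cL (δone k C Δ) (δone k C Δ) = cR (δone k C Δ) (δone k C Δ) ∧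
    cL (δhatone k C Δ) (δhatone k C Δ) = cR (δhatone k C Δ) (δhatone k C Δ) ∧
    cR (δhatone k C Δ) (δhatone k C Δ) = cR (δone k C Δ) (δhatone k C Δ) ∧
    cL (δone k C Δ) (δone k C Δ) = cL (δhatone k C Δ) (δone k C Δ) ∧
    cL (δone k C Δ) (δhatone k C Δ) = cR (δhatone k C Δ) (δone k C Δ) := by
  classical
  set i1 := LinearMap.inl k C C with hi1
  set i2 := LinearMap.inr k C C with hi2
  have d_inl : δone k C Δ ∘ₗ i1 = TensorProduct.map i1 i1 ∘ₗ Δ := LinearMap.coprod_inl _ _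
  have d_inr : δone k C Δ ∘ₗ i2 = TensorProduct.map i1 i2 ∘ₗ Δ := LinearMap.coprod_inr _ _
  have h_inl : δhatone k C Δ ∘ₗ i1 = TensorProduct.map i1 i1 ∘ₗ Δ := LinearMap.coprod_inl _ _
  have h_inr : δhatone k C Δ ∘ₗ i2 = TensorProduct.map i2 i1 ∘ₗ Δ := LinearMap.coprod_inr _ _
  refine ⟨?_, ?_, ?_, ?_, ?_⟩
  · apply LinearMap.prod_ext
    · rw [red_L Δ _ _ i1 i1 i1 i1 i1 d_inl d_inl, red_R Δ _ _ i1 i1 i1 i1 i1 d_inl d_inl, hΔ]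
    · rw [red_L Δ _ _ i2 i1 i2 i1 i1 d_inr d_inl, red_R Δ _ _ i2 i1 i2 i1 i2 d_inr d_inr, hΔ]
  · apply LinearMap.prod_ext
    · rw [red_L Δ _ _ i1 i1 i1 i1 i1 h_inl h_inl, red_R Δ _ _ i1 i1 i1 i1 i1 h_inl h_inl, hΔ]
    · rw [red_L Δ _ _ i2 i2 i1 i2 i1 h_inr h_inr, red_R Δ _ _ i2 i2 i1 i1 i1 h_inr h_inl, hΔ]
  · apply LinearMap.prod_ext
    · rw [red_R Δ _ _ i1 i1 i1 i1 i1 h_inl h_inl, red_R Δ _ _ i1 i1 i1 i1 i1 h_inl d_inl]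
    · rw [red_R Δ _ _ i2 i2 i1 i1 i1 h_inr h_inl, red_R Δ _ _ i2 i2 i1 i1 i1 h_inr d_inl]
  · apply LinearMap.prod_ext
    · rw [red_L Δ _ _ i1 i1 i1 i1 i1 d_inl d_inl, red_L Δ _ _ i1 i1 i1 i1 i1 d_inl h_inl]
    · rw [red_L Δ _ _ i2 i1 i2 i1 i1 d_inr d_inl, red_L Δ _ _ i2 i1 i2 i1 i1 d_inr h_inl]
  · apply LinearMap.prod_ext
    · rw [red_L Δ _ _ i1 i1 i1 i1 i1 h_inl d_inl, red_R Δ _ _ i1 i1 i1 i1 i1 d_inl h_inl, hΔ]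
    · rw [red_L Δ _ _ i2 i2 i1 i1 i2 h_inr d_inr, red_R Δ _ _ i2 i1 i2 i2 i1 d_inr h_inr, hΔ]
end

section
/- The triple (D, Δ*, δ₁, δ̂₁) from the self-entanglement construction is a coassociative cotrialgebra: in addition to Δ* being coassociative and (D, δ₁, δ̂₁) a coassociative codialgebra, one has (δ̂₁ ⊗ id)δ̂₁ = (id ⊗ Δ*)δ̂₁, (Δ* ⊗ id)δ̂₁ = (id ⊗ δ̂₁)Δ*, (δ̂₁ ⊗ id)Δ* = (id ⊗ δ₁)Δ*, (δ₁ ⊗ id)Δ* = (id ⊗ Δ*)δ₁, and (Δ* ⊗ id)δ₁ = (id ⊗ δ₁)δ₁. -/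
open TensorProduct

private lemma cL_comp {k C D : Type*} [Field k] [AddCommGroup C] [Module k C]
    [AddCommGroup D] [Module k D] (Δ : C →ₗ[k] C ⊗[k] C)
    {F G : D →ₗ[k] D ⊗[k] D} {i a b x y : C →ₗ[k] D}
    (hG : G ∘ₗ i = TensorProduct.map a b ∘ₗ Δ)
    (hF : F ∘ₗ a = TensorProduct.map x y ∘ₗ Δ) :
    cL F G ∘ₗ i = TensorProduct.map x (TensorProduct.map y b) ∘ₗ cL Δ Δ := by
  have h1 : TensorProduct.map F (LinearMap.id (R := k) (M := D)) ∘ₗ TensorProduct.map a b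
      = TensorProduct.map (TensorProduct.map x y) b ∘ₗ TensorProduct.map Δ LinearMap.id := by
    rw [← TensorProduct.map_comp, ← TensorProduct.map_comp, hF, LinearMap.id_comp,
      LinearMap.comp_id]
  unfold cL
  simp only [LinearMap.comp_assoc]
  rw [hG, ← LinearMap.comp_assoc _ _ (TensorProduct.map F LinearMap.id), h1,
    LinearMap.comp_assoc, ← LinearMap.comp_assoc _ (TensorProduct.map (TensorProduct.map x y) b),
    ← TensorProduct.map_map_comp_assoc_eq, LinearMap.comp_assoc]

private lemma cR_comp {k C D : Type*} [Field k] [AddCommGroup C] [Module k C]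
    [AddCommGroup D] [Module k D] (Δ : C →ₗ[k] C ⊗[k] C)
    {F G : D →ₗ[k] D ⊗[k] D} {i a b x y : C →ₗ[k] D}
    (hG : G ∘ₗ i = TensorProduct.map a b ∘ₗ Δ)
    (hF : F ∘ₗ b = TensorProduct.map x y ∘ₗ Δ) :
    cR F G ∘ₗ i = TensorProduct.map a (TensorProduct.map x y) ∘ₗ cR Δ Δ := by
  have h1 : TensorProduct.map (LinearMap.id (R := k) (M := D)) F ∘ₗ TensorProduct.map a b
      = TensorProduct.map a (TensorProduct.map x y) ∘ₗ TensorProduct.map LinearMap.id Δ := by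
    rw [← TensorProduct.map_comp, ← TensorProduct.map_comp, hF, LinearMap.id_comp,
      LinearMap.comp_id]
  unfold cR
  simp only [LinearMap.comp_assoc]
  rw [hG, ← LinearMap.comp_assoc _ _ (TensorProduct.map LinearMap.id F), h1,
    LinearMap.comp_assoc]

/-- `(D, Δ*, δ₁, δ̂₁)` from the self-entanglement construction is a
coassociative cotrialgebra: `Δ*` is coassociative, `(D, δ₁, δ̂₁)` is a coassociative
codialgebra, and moreover `(δ̂₁ ⊗ id)δ̂₁ = (id ⊗ Δ*)δ̂₁`, `(Δ* ⊗ id)δ̂₁ = (id ⊗ δ̂₁)Δ*`,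
`(δ̂₁ ⊗ id)Δ* = (id ⊗ δ₁)Δ*`, `(δ₁ ⊗ id)Δ* = (id ⊗ Δ*)δ₁` and
`(Δ* ⊗ id)δ₁ = (id ⊗ δ₁)δ₁`. -/
theorem self_entanglement_cotrialgebra {k C : Type*} [Field k] [AddCommGroup C] [Module k C]
    (Δ : C →ₗ[k] C ⊗[k] C) (hΔ : cL Δ Δ = cR Δ Δ) :
    -- Δ* is coassociative
    cL (Δstar k C Δ) (Δstar k C Δ) = cR (Δstar k C Δ) (Δstar k C Δ) ∧
    -- (D, δ₁, δ̂₁) is a coassociative codialgebra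
    (cL (δone k C Δ) (δone k C Δ) = cR (δone k C Δ) (δone k C Δ) ∧
     cL (δhatone k C Δ) (δhatone k C Δ) = cR (δhatone k C Δ) (δhatone k C Δ) ∧
     cR (δhatone k C Δ) (δhatone k C Δ) = cR (δone k C Δ) (δhatone k C Δ) ∧
     cL (δone k C Δ) (δone k C Δ) = cL (δhatone k C Δ) (δone k C Δ) ∧
     cL (δone k C Δ) (δhatone k C Δ) = cR (δhatone k C Δ) (δone k C Δ)) ∧
    -- (δ̂₁ ⊗ id)δ̂₁ = (id ⊗ Δ*)δ̂₁
    cL (δhatone k C Δ) (δhatone k C Δ) = cR (Δstar k C Δ) (δhatone k C Δ) ∧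
    -- (Δ* ⊗ id)δ̂₁ = (id ⊗ δ̂₁)Δ*
    cL (Δstar k C Δ) (δhatone k C Δ) = cR (δhatone k C Δ) (Δstar k C Δ) ∧
    -- (δ̂₁ ⊗ id)Δ* = (id ⊗ δ₁)Δ*
    cL (δhatone k C Δ) (Δstar k C Δ) = cR (δone k C Δ) (Δstar k C Δ) ∧
    -- (δ₁ ⊗ id)Δ* = (id ⊗ Δ*)δ₁
    cL (δone k C Δ) (Δstar k C Δ) = cR (Δstar k C Δ) (δone k C Δ) ∧
    -- (Δ* ⊗ id)δ₁ = (id ⊗ δ₁)δ₁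
    cL (Δstar k C Δ) (δone k C Δ) = cR (δone k C Δ) (δone k C Δ) := by
  have Sl : Δstar k C Δ ∘ₗ LinearMap.inl k C C
      = TensorProduct.map (LinearMap.inl k C C) (LinearMap.inl k C C) ∘ₗ Δ := by
    unfold Δstar; exact LinearMap.coprod_inl _ _
  have Sr : Δstar k C Δ ∘ₗ LinearMap.inr k C C
      = TensorProduct.map (LinearMap.inr k C C) (LinearMap.inr k C C) ∘ₗ Δ := by
    unfold Δstar; exact LinearMap.coprod_inr _ _
  have Ol : δone k C Δ ∘ₗ LinearMap.inl k C C
      = TensorProduct.map (LinearMap.inl k C C) (LinearMap.inl k C C) ∘ₗ Δ := by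
    unfold δone; exact LinearMap.coprod_inl _ _
  have Or : δone k C Δ ∘ₗ LinearMap.inr k C C
      = TensorProduct.map (LinearMap.inl k C C) (LinearMap.inr k C C) ∘ₗ Δ := by
    unfold δone; exact LinearMap.coprod_inr _ _
  have Hl : δhatone k C Δ ∘ₗ LinearMap.inl k C C
      = TensorProduct.map (LinearMap.inl k C C) (LinearMap.inl k C C) ∘ₗ Δ := by
    unfold δhatone; exact LinearMap.coprod_inl _ _
  have Hr : δhatone k C Δ ∘ₗ LinearMap.inr k C C
      = TensorProduct.map (LinearMap.inr k C C) (LinearMap.inl k C C) ∘ₗ Δ := by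
    unfold δhatone; exact LinearMap.coprod_inr _ _
  refine ⟨?_, ⟨?_, ?_, ?_, ?_, ?_⟩, ?_, ?_, ?_, ?_, ?_⟩ <;>
    refine LinearMap.prod_ext ?_ ?_
  · rw [cL_comp Δ Sl Sl, cR_comp Δ Sl Sl, hΔ]
  · rw [cL_comp Δ Sr Sr, cR_comp Δ Sr Sr, hΔ]
  · rw [cL_comp Δ Ol Ol, cR_comp Δ Ol Ol, hΔ]
  · rw [cL_comp Δ Or Ol, cR_comp Δ Or Or, hΔ]
  · rw [cL_comp Δ Hl Hl, cR_comp Δ Hl Hl, hΔ]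
  · rw [cL_comp Δ Hr Hr, cR_comp Δ Hr Hl, hΔ]
  · rw [cR_comp Δ Hl Hl, cR_comp Δ Hl Ol]
  · rw [cR_comp Δ Hr Hl, cR_comp Δ Hr Ol]
  · rw [cL_comp Δ Ol Ol, cL_comp Δ Ol Hl]
  · rw [cL_comp Δ Or Ol, cL_comp Δ Or Hl]
  · rw [cL_comp Δ Hl Ol, cR_comp Δ Ol Hl, hΔ]
  · rw [cL_comp Δ Hr Or, cR_comp Δ Or Hr, hΔ]
  · rw [cL_comp Δ Hl Hl, cR_comp Δ Hl Sl, hΔ]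
  · rw [cL_comp Δ Hr Hr, cR_comp Δ Hr Sl, hΔ]
  · rw [cL_comp Δ Hl Sl, cR_comp Δ Sl Hl, hΔ]
  · rw [cL_comp Δ Hr Sr, cR_comp Δ Sr Hr, hΔ]
  · rw [cL_comp Δ Sl Hl, cR_comp Δ Sl Ol, hΔ]
  · rw [cL_comp Δ Sr Hr, cR_comp Δ Sr Or, hΔ]
  · rw [cL_comp Δ Sl Ol, cR_comp Δ Ol Sl, hΔ]
  · rw [cL_comp Δ Sr Or, cR_comp Δ Or Sr, hΔ]
  · rw [cL_comp Δ Ol Sl, cR_comp Δ Ol Ol, hΔ]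
  · rw [cL_comp Δ Or Sl, cR_comp Δ Or Or, hΔ]
end

section
/- Let (T, Δ, δ, δ̂) be a coassociative cotrialgebra and (A, m) an associative algebra. On the space L(T, A) of linear maps T → A, define f ⊥ g = m(f⊗g)Δ, f ⊣ g = m(f⊗g)δ̂, f ⊢ g = m(f⊗g)δ. Then (L(T,A), ⊣, ⊢) is an associative dialgebra, and hence [f,g] := f ⊣ g − g ⊢ f makes L(T,A) a Leibniz algebra. -/
open TensorProduct

/-- The convolution product `f ⋆_c g := m ∘ (f ⊗ g) ∘ c` on `L(T, A)` attached to a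
coproduct `c` on `T`. -/
noncomputable def conv {k T A : Type*} [Field k] [AddCommGroup T] [Module k T]
    [Ring A] [Algebra k A] (c : T →ₗ[k] T ⊗[k] T) (f g : T →ₗ[k] A) : T →ₗ[k] A :=
  LinearMap.mul' k A ∘ₗ TensorProduct.map f g ∘ₗ c


noncomputable def tri {k T A : Type*} [Field k] [AddCommGroup T] [Module k T]
    [Ring A] [Algebra k A] (f g h : T →ₗ[k] A) (e : T →ₗ[k] T ⊗[k] (T ⊗[k] T)) :
    T →ₗ[k] A :=
  LinearMap.mul' k A ∘ₗ TensorProduct.map f (LinearMap.mul' k A ∘ₗ TensorProduct.map g h) ∘ₗ e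

lemma tri_cR {k T A : Type*} [Field k] [AddCommGroup T] [Module k T]
    [Ring A] [Algebra k A] (c d : T →ₗ[k] T ⊗[k] T) (f g h : T →ₗ[k] A) :
    conv c f (conv d g h) = tri f g h (cR d c) := by
  unfold conv tri cR
  ext x
  simp only [LinearMap.comp_apply]
  generalize c x = t
  induction t using TensorProduct.induction_on with
  | zero => simp
  | tmul a b => simp
  | add u v hu hv => simp_all

lemma tri_cL {k T A : Type*} [Field k] [AddCommGroup T] [Module k T]
    [Ring A] [Algebra k A] (c d : T →ₗ[k] T ⊗[k] T) (f g h : T →ₗ[k] A) :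
    conv c (conv d f g) h = tri f g h (cL d c) := by
  unfold conv tri cL
  ext x
  simp only [LinearMap.comp_apply, LinearEquiv.coe_coe]
  generalize c x = t
  induction t using TensorProduct.induction_on with
  | zero => simp
  | tmul a b =>
    simp only [TensorProduct.map_tmul, LinearMap.comp_apply, LinearMap.id_apply]
    generalize d a = s
    induction s using TensorProduct.induction_on with
    | zero => simp
    | tmul p q => simp [mul_assoc]
    | add u v hu hv =>
      simp only [map_add, TensorProduct.add_tmul, add_mul] at *
      rw [hu, hv]
  | add u v hu hv => simp_all

lemma map_sub_left' {k T A : Type*} [Field k] [AddCommGroup T] [Module k T]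
    [Ring A] [Algebra k A] (f g h : T →ₗ[k] A) :
    TensorProduct.map (f - g) h = TensorProduct.map f h - TensorProduct.map g h := by
  apply TensorProduct.ext'
  intro x y
  simp [TensorProduct.sub_tmul]

lemma map_sub_right' {k T A : Type*} [Field k] [AddCommGroup T] [Module k T]
    [Ring A] [Algebra k A] (f g h : T →ₗ[k] A) :
    TensorProduct.map f (g - h) = TensorProduct.map f g - TensorProduct.map f h := by
  apply TensorProduct.ext'
  intro x y
  simp [TensorProduct.tmul_sub]

lemma conv_sub_left {k T A : Type*} [Field k] [AddCommGroup T] [Module k T]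
    [Ring A] [Algebra k A] (c : T →ₗ[k] T ⊗[k] T) (f g h : T →ₗ[k] A) :
    conv c (f - g) h = conv c f h - conv c g h := by
  unfold conv
  rw [map_sub_left']
  ext x; simp

lemma conv_sub_right {k T A : Type*} [Field k] [AddCommGroup T] [Module k T]
    [Ring A] [Algebra k A] (c : T →ₗ[k] T ⊗[k] T) (f g h : T →ₗ[k] A) :
    conv c f (g - h) = conv c f g - conv c f h := by
  unfold conv
  rw [map_sub_right']
  ext x; simp

/-- If `(T, Δ, δ, δ̂)` is a coassociative cotrialgebra and `(A, m)` an
associative algebra, then `L(T, A)` with `f ⊣ g = m(f⊗g)δ̂` and `f ⊢ g = m(f⊗g)δ` is an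
associative dialgebra, and the bracket `[f,g] := f ⊣ g − g ⊢ f` satisfies the Leibniz
identity. -/
theorem cotrialgebra_convolution_dialgebra {k T A : Type*} [Field k]
    [AddCommGroup T] [Module k T] [Ring A] [Algebra k A]
    (Δ δ δh : T →ₗ[k] T ⊗[k] T)
    (hΔ : cL Δ Δ = cR Δ Δ) (hδ : cL δ δ = cR δ δ) (hδh : cL δh δh = cR δh δh)
    (h1 : cR δh δh = cR δ δh) (h2 : cL δ δ = cL δh δ) (h3 : cL δ δh = cR δh δ)
    (h4 : cL δh δh = cR Δ δh) (h5 : cL Δ δh = cR δh Δ) (h6 : cL δh Δ = cR δ Δ)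
    (h7 : cL δ Δ = cR Δ δ) (h8 : cL Δ δ = cR δ δ) :
    ∀ f g h : T →ₗ[k] A,
      -- ⊣ is associative
      conv δh (conv δh f g) h = conv δh f (conv δh g h) ∧
      -- ⊢ is associative
      conv δ (conv δ f g) h = conv δ f (conv δ g h) ∧
      -- f ⊣ (g ⊣ h) = f ⊣ (g ⊢ h)
      conv δh f (conv δh g h) = conv δh f (conv δ g h) ∧
      -- (f ⊢ g) ⊣ h = f ⊢ (g ⊣ h)
      conv δh (conv δ f g) h = conv δ f (conv δh g h) ∧
      -- (f ⊣ g) ⊢ h = (f ⊢ g) ⊢ h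
      conv δ (conv δh f g) h = conv δ (conv δ f g) h ∧
      -- Leibniz identity for [f,g] := f ⊣ g − g ⊢ f
      (conv δh (conv δh f g - conv δ g f) h - conv δ h (conv δh f g - conv δ g f)
        = (conv δh (conv δh f h - conv δ h f) g - conv δ g (conv δh f h - conv δ h f))
          + (conv δh f (conv δh g h - conv δ h g)
              - conv δ (conv δh g h - conv δ h g) f)) := by
  intro f g h
  refine ⟨?_, ?_, ?_, ?_, ?_, ?_⟩
  · rw [tri_cL, tri_cR, hδh]
  · rw [tri_cL, tri_cR, hδ]
  · rw [tri_cR, tri_cR, ← h1]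
  · rw [tri_cL, tri_cR, h3]
  · rw [tri_cL, tri_cL, ← h2]
  · simp only [conv_sub_left, conv_sub_right, tri_cL, tri_cR, hδh, h3, ← h1, ← h2, hδ]
    abel
end

section
/- Let (C, Δ) be a coassociative coalgebra with coproduct Δ(a_i) = Σ_{j+k=i} a_j ⊗ a_k on basis a₀, ..., a_{n−1} (indices in {0,...,n−1}, sum over ordered pairs (j,k) of such indices with j + k = i), let q ∈ k be invertible, and let x₀, ..., x_{n−1} be a second family of basis vectors of a space E = span(a_i) ⊕ span(x_i). Define δ(a_i) = Σ_{j+k=i} a_j ⊗ a_k, δ(x_i) = Σ_{j+k=i} a_j ⊗ x_k, δ̂(a_i) = Σ_{j+k=i} a_j ⊗ a_k, δ̂(x_i) = Σ_{j+k=i} q^k x_j ⊗ a_k. Then (E, δ, δ̂) is a coassociative codialgebra: δ and δ̂ are coassociative, (id⊗δ̂)δ̂=(id⊗δ)δ̂, (δ⊗id)δ=(δ̂⊗id)δ, and (id⊗δ̂)δ=(δ⊗id)δ̂. -/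
open TensorProduct

/-!
Each of `δ`, `δ̂` sends a basis vector `vᵢ` to an antidiagonal sum `Σ_{j+l=i} uⱼ ⊗ u'ₗ`, so
every identity, evaluated at a basis vector, compares two iterated antidiagonal sums, and both
sides of a coassociativity-type identity reindex to the same sum over `r + s + l = i`. The twist
by `q` is absorbed into the rescaled family `q^l • aₗ`, on which `δ` and `δ̂` are again
antidiagonal because `q^(s+l) = q^s q^l`.
-/

section AntidiagonalSum

variable {M : Type*} [AddCommMonoid M] {n : ℕ}

def antidiagonalSum (i : Fin n) (F : Fin n → Fin n → M) : M :=
  ∑ p : Fin n × Fin n, if (p.1 : ℕ) + (p.2 : ℕ) = (i : ℕ) then F p.1 p.2 else 0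

theorem Fin.sum_ite_and_eq_val (P : ℕ → Prop) [DecidablePred P] (hP : ∀ k, P k → k < n)
    (m : ℕ) (v : M) :
    ∑ j : Fin n, (if P j ∧ m = j then v else 0) = if P m then v else 0 := by
  by_cases hm : P m
  · rw [Fintype.sum_eq_single (⟨m, hP m hm⟩ : Fin n)
      fun j hj => if_neg fun h : P j ∧ m = j => hj (Fin.ext h.2.symm)]
    simp [hm]
  · rw [if_neg hm]
    exact Finset.sum_eq_zero fun j _ => if_neg fun h : P j ∧ m = j => hm (h.2 ▸ h.1)

theorem antidiagonalSum_antidiagonalSum_left (i : Fin n) (F : Fin n → Fin n → Fin n → M) :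
    antidiagonalSum i (fun j l => antidiagonalSum j (fun r s => F r s l)) =
      ∑ r : Fin n, ∑ s : Fin n, ∑ l : Fin n, if (r : ℕ) + s + l = i then F r s l else 0 := by
  simp only [antidiagonalSum, Finset.ite_sum_zero, ← ite_and]
  rw [Finset.sum_comm]
  simp only [Fintype.sum_prod_type_right]
  rw [Finset.sum_comm]
  refine Fintype.sum_congr _ _ fun r => Fintype.sum_congr _ _ fun s =>
    Fintype.sum_congr _ _ fun l => ?_
  exact Fin.sum_ite_and_eq_val (· + l = i) (fun _ _ => by omega) _ _

theorem antidiagonalSum_antidiagonalSum_right (i : Fin n) (F : Fin n → Fin n → Fin n → M) :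
    antidiagonalSum i (fun r m => antidiagonalSum m (fun s l => F r s l)) =
      ∑ r : Fin n, ∑ s : Fin n, ∑ l : Fin n, if (r : ℕ) + s + l = i then F r s l else 0 := by
  simp only [antidiagonalSum, Finset.ite_sum_zero, ← ite_and, Fintype.sum_prod_type]
  refine Fintype.sum_congr _ _ fun r => ?_
  rw [Finset.sum_comm]
  refine Fintype.sum_congr _ _ fun s => ?_
  rw [Finset.sum_comm]
  refine Fintype.sum_congr _ _ fun l => ?_
  rw [Fin.sum_ite_and_eq_val (r + · = i) (fun _ _ => by omega), add_assoc]

-- Needs `i < n`: for larger `i` the two sides would drop different out-of-range summands.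
theorem antidiagonalSum_assoc (i : Fin n) (F : Fin n → Fin n → Fin n → M) :
    antidiagonalSum i (fun j l => antidiagonalSum j (fun r s => F r s l)) =
      antidiagonalSum i (fun r m => antidiagonalSum m (fun s l => F r s l)) := by
  rw [antidiagonalSum_antidiagonalSum_left, antidiagonalSum_antidiagonalSum_right]

theorem antidiagonalSum_congr {i : Fin n} {F G : Fin n → Fin n → M}
    (h : ∀ j l : Fin n, (j : ℕ) + l = i → F j l = G j l) :
    antidiagonalSum i F = antidiagonalSum i G :=
  Fintype.sum_congr _ _ fun p => by split_ifs with hp; exacts [h _ _ hp, rfl]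

theorem map_antidiagonalSum {N G : Type*} [AddCommMonoid N] [FunLike G M N]
    [AddMonoidHomClass G M N] (φ : G) (i : Fin n) (F : Fin n → Fin n → M) :
    φ (antidiagonalSum i F) = antidiagonalSum i fun j l => φ (F j l) := by
  simp only [antidiagonalSum, map_sum, apply_ite φ, map_zero]

end AntidiagonalSum

section TensorProduct

variable {R M N : Type*} [CommSemiring R] [AddCommMonoid M] [Module R M]
  [AddCommMonoid N] [Module R N] {n : ℕ}

theorem tmul_antidiagonalSum (x : M) (i : Fin n) (F : Fin n → Fin n → N) :
    x ⊗ₜ[R] antidiagonalSum i F = antidiagonalSum i fun j l => x ⊗ₜ F j l :=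
  map_antidiagonalSum (TensorProduct.mk R M N x) i F

theorem antidiagonalSum_tmul (i : Fin n) (F : Fin n → Fin n → M) (y : N) :
    antidiagonalSum i F ⊗ₜ[R] y = antidiagonalSum i fun j l => F j l ⊗ₜ y :=
  map_antidiagonalSum ((TensorProduct.mk R M N).flip y) i F

theorem smul_antidiagonalSum (c : R) (i : Fin n) (F : Fin n → Fin n → M) :
    c • antidiagonalSum i F = antidiagonalSum i fun j l => c • F j l :=
  map_antidiagonalSum (DistribSMul.toAddMonoidHom M c) i F

end TensorProduct

section Coproduct

variable {k M : Type*} [Field k] [AddCommGroup M] [Module k M] {n : ℕ}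
  {f g : M →ₗ[k] M ⊗[k] M} {v : M} {i : Fin n}

theorem cL_apply_of_antidiagonalSum {u₁ u₂ u₁₂ u₃ : Fin n → M}
    (hg : g v = antidiagonalSum i fun j l => u₁₂ j ⊗ₜ u₃ l)
    (hf : ∀ j, f (u₁₂ j) = antidiagonalSum j fun r s => u₁ r ⊗ₜ u₂ s) :
    cL f g v = antidiagonalSum i fun j l =>
      antidiagonalSum j fun r s => u₁ r ⊗ₜ (u₂ s ⊗ₜ u₃ l) := by
  simp only [cL, LinearMap.comp_apply, hg, map_antidiagonalSum, map_tmul, hf,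
    LinearMap.id_apply, antidiagonalSum_tmul, LinearEquiv.coe_coe, assoc_tmul]

theorem cR_apply_of_antidiagonalSum {u₁ u₂ u₂₃ u₃ : Fin n → M}
    (hg : g v = antidiagonalSum i fun r m => u₁ r ⊗ₜ u₂₃ m)
    (hf : ∀ m, f (u₂₃ m) = antidiagonalSum m fun s l => u₂ s ⊗ₜ u₃ l) :
    cR f g v = antidiagonalSum i fun r m =>
      antidiagonalSum m fun s l => u₁ r ⊗ₜ (u₂ s ⊗ₜ u₃ l) := by
  simp only [cR, LinearMap.comp_apply, hg, map_antidiagonalSum, map_tmul, hf,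
    LinearMap.id_apply, tmul_antidiagonalSum]

theorem cL_apply_eq_cR_apply {f' g' : M →ₗ[k] M ⊗[k] M} {u₁ u₂ u₃ u₁₂ u₂₃ : Fin n → M}
    (hg : g v = antidiagonalSum i fun j l => u₁₂ j ⊗ₜ u₃ l)
    (hf : ∀ j, f (u₁₂ j) = antidiagonalSum j fun r s => u₁ r ⊗ₜ u₂ s)
    (hg' : g' v = antidiagonalSum i fun r m => u₁ r ⊗ₜ u₂₃ m)
    (hf' : ∀ m, f' (u₂₃ m) = antidiagonalSum m fun s l => u₂ s ⊗ₜ u₃ l) :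
    cL f g v = cR f' g' v := by
  rw [cL_apply_of_antidiagonalSum hg hf, cR_apply_of_antidiagonalSum hg' hf',
    antidiagonalSum_assoc]

theorem apply_pow_smul_of_antidiagonalSum {a : Fin n → M} (q : k)
    (hf : ∀ m, f (a m) = antidiagonalSum m fun s l => a s ⊗ₜ a l) (m : Fin n) :
    f (q ^ (m : ℕ) • a m) =
      antidiagonalSum m fun s l => (q ^ (s : ℕ) • a s) ⊗ₜ (q ^ (l : ℕ) • a l) := by
  rw [map_smul, hf, smul_antidiagonalSum]
  exact antidiagonalSum_congr fun s l hsl => by rw [smul_tmul_smul, ← pow_add, hsl]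

end Coproduct

theorem cibils_codialgebra_general {k E : Type*} [Field k] [AddCommGroup E] [Module k E]
    (n : ℕ) (q : k)
    (a x : Fin n → E)
    (b : Module.Basis (Fin n ⊕ Fin n) k E)
    (hba : ∀ i, b (Sum.inl i) = a i) (hbx : ∀ i, b (Sum.inr i) = x i)
    (δ δh : E →ₗ[k] E ⊗[k] E)
    (hδa : ∀ i : Fin n, δ (a i)
      = ∑ p : Fin n × Fin n,
          if (p.1 : ℕ) + (p.2 : ℕ) = (i : ℕ) then a p.1 ⊗ₜ[k] a p.2 else 0)
    (hδx : ∀ i : Fin n, δ (x i)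
      = ∑ p : Fin n × Fin n,
          if (p.1 : ℕ) + (p.2 : ℕ) = (i : ℕ) then a p.1 ⊗ₜ[k] x p.2 else 0)
    (hδha : ∀ i : Fin n, δh (a i)
      = ∑ p : Fin n × Fin n,
          if (p.1 : ℕ) + (p.2 : ℕ) = (i : ℕ) then a p.1 ⊗ₜ[k] a p.2 else 0)
    (hδhx : ∀ i : Fin n, δh (x i)
      = ∑ p : Fin n × Fin n,
          if (p.1 : ℕ) + (p.2 : ℕ) = (i : ℕ)
          then q ^ (p.2 : ℕ) • (x p.1 ⊗ₜ[k] a p.2) else 0) :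
    -- δ and δ̂ are coassociative
    cL δ δ = cR δ δ ∧ cL δh δh = cR δh δh ∧
    -- (id ⊗ δ̂)δ̂ = (id ⊗ δ)δ̂
    cR δh δh = cR δ δh ∧
    -- (δ ⊗ id)δ = (δ̂ ⊗ id)δ
    cL δ δ = cL δh δ ∧
    -- (id ⊗ δ̂)δ = (δ ⊗ id)δ̂
    cR δh δ = cL δ δh := by
  set w : Fin n → E := fun l => q ^ (l : ℕ) • a l
  have hδhx' : ∀ i, δh (x i) = antidiagonalSum i fun j l => x j ⊗ₜ w l := fun i => by
    simp only [hδhx, antidiagonalSum, w, tmul_smul]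
  have hδw := apply_pow_smul_of_antidiagonalSum q hδa
  have hδhw := apply_pow_smul_of_antidiagonalSum q hδha
  refine ⟨b.ext ?_, b.ext ?_, b.ext ?_, b.ext ?_, b.ext ?_⟩ <;> rintro (i | i) <;>
    simp only [hba, hbx]
  · exact cL_apply_eq_cR_apply (hδa i) hδa (hδa i) hδa
  · exact cL_apply_eq_cR_apply (hδx i) hδa (hδx i) hδx
  · exact cL_apply_eq_cR_apply (hδha i) hδha (hδha i) hδha
  · exact cL_apply_eq_cR_apply (hδhx' i) hδhx' (hδhx' i) hδhw
  · rw [cR_apply_of_antidiagonalSum (hδha i) hδha, cR_apply_of_antidiagonalSum (hδha i) hδa]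
  · rw [cR_apply_of_antidiagonalSum (hδhx' i) hδhw, cR_apply_of_antidiagonalSum (hδhx' i) hδw]
  · rw [cL_apply_of_antidiagonalSum (hδa i) hδa, cL_apply_of_antidiagonalSum (hδa i) hδha]
  · rw [cL_apply_of_antidiagonalSum (hδx i) hδa, cL_apply_of_antidiagonalSum (hδx i) hδha]
  · exact (cL_apply_eq_cR_apply (hδha i) hδa (hδa i) hδha).symm
  · exact (cL_apply_eq_cR_apply (hδhx' i) hδx (hδx i) hδhx').symm

/-- On the `2n`-dimensional space `E` with basis
`a₀, …, a_{n−1}, x₀, …, x_{n−1}` and invertible `q ∈ k`, the coproducts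
`δ(aᵢ) = Σ_{j+l=i} aⱼ ⊗ a_l`, `δ(xᵢ) = Σ_{j+l=i} aⱼ ⊗ x_l`,
`δ̂(aᵢ) = Σ_{j+l=i} aⱼ ⊗ a_l`, `δ̂(xᵢ) = Σ_{j+l=i} q^l xⱼ ⊗ a_l`
make `(E, δ, δ̂)` a coassociative codialgebra, and `(id ⊗ δ̂)δ = (δ ⊗ id)δ̂`. -/
theorem cibils_codialgebra {k E : Type*} [Field k] [AddCommGroup E] [Module k E]
    (n : ℕ) (hn : 0 < n) (q : k) (hq : q ≠ 0)
    (a x : Fin n → E)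
    (b : Module.Basis (Fin n ⊕ Fin n) k E)
    (hba : ∀ i, b (Sum.inl i) = a i) (hbx : ∀ i, b (Sum.inr i) = x i)
    (δ δh : E →ₗ[k] E ⊗[k] E)
    (hδa : ∀ i : Fin n, δ (a i)
      = ∑ p : Fin n × Fin n,
          if (p.1 : ℕ) + (p.2 : ℕ) = (i : ℕ) then a p.1 ⊗ₜ[k] a p.2 else 0)
    (hδx : ∀ i : Fin n, δ (x i)
      = ∑ p : Fin n × Fin n,
          if (p.1 : ℕ) + (p.2 : ℕ) = (i : ℕ) then a p.1 ⊗ₜ[k] x p.2 else 0)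
    (hδha : ∀ i : Fin n, δh (a i)
      = ∑ p : Fin n × Fin n,
          if (p.1 : ℕ) + (p.2 : ℕ) = (i : ℕ) then a p.1 ⊗ₜ[k] a p.2 else 0)
    (hδhx : ∀ i : Fin n, δh (x i)
      = ∑ p : Fin n × Fin n,
          if (p.1 : ℕ) + (p.2 : ℕ) = (i : ℕ)
          then q ^ (p.2 : ℕ) • (x p.1 ⊗ₜ[k] a p.2) else 0) :
    -- δ and δ̂ are coassociative
    cL δ δ = cR δ δ ∧ cL δh δh = cR δh δh ∧
    -- (id ⊗ δ̂)δ̂ = (id ⊗ δ)δ̂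
    cR δh δh = cR δ δh ∧
    -- (δ ⊗ id)δ = (δ̂ ⊗ id)δ
    cL δ δ = cL δh δ ∧
    -- (id ⊗ δ̂)δ = (δ ⊗ id)δ̂
    cR δh δ = cL δ δh :=
  cibils_codialgebra_general n q a x b hba hbx δ δh hδa hδx hδha hδhx
end
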